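/- Counting lemma for labels added after the first k steps: for every 0 ≤ k ≤ n, the total number of label entries added after step k, namely Σ_{u ∈ V} ( |L'_n(u)| - |L'_k(u)| ), is at most the number of ordered pairs (s, t) ∈ V × V with Query(s, t, L'_k) > d_G(s, t) (the pairs not yet covered by the index after k pruned BFSs). -/

import Mathlib

open SimpleGraph

/-- The 2-hop query value computed from a label assignment `L`:
the minimum of `d₁ + d₂` over common label vertices, `∞` if none. -/
noncomputable def Query {V : Type*} (L : V → Set (V × ℕ∞)) (s t : V) : ℕ∞ :=
  sInf {x : ℕ∞ | ∃ w d₁ d₂, (w, d₁) ∈ L s ∧ (w, d₂) ∈ L t ∧ x = d₁ + d₂}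

/- The naive landmark labels `L_k`. -/
open Classical in
noncomputable def naiveL {V : Type*} (G : SimpleGraph V) (ord : ℕ → V) :
    ℕ → V → Set (V × ℕ∞)
  | 0 => fun _ => ∅
  | (k + 1) => fun u =>
      if G.edist (ord (k + 1)) u < ⊤ then
        naiveL G ord k u ∪ {(ord (k + 1), G.edist (ord (k + 1)) u)}
      else naiveL G ord k u

/- The pruned landmark labels `L'_k`. -/
open Classical in
noncomputable def prunedL {V : Type*} (G : SimpleGraph V) (ord : ℕ → V) :
    ℕ → V → Set (V × ℕ∞)
  | 0 => fun _ => ∅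
  | (k + 1) => fun u =>
      if G.edist (ord (k + 1)) u < ⊤ ∧
          G.edist (ord (k + 1)) u < Query (prunedL G ord k) (ord (k + 1)) u then
        prunedL G ord k u ∪ {(ord (k + 1), G.edist (ord (k + 1)) u)}
      else prunedL G ord k u

/-- `P_G(s,t)`: the set of vertices on shortest paths between `s` and `t`. -/
def PG {V : Type*} (G : SimpleGraph V) (s t : V) : Set V :=
  {w | G.edist s w + G.edist w t = G.edist s t}

section Aux

variable {V : Type*} (G : SimpleGraph V) (ord : ℕ → V)

lemma Query_anti {L L' : V → Set (V × ℕ∞)} (h : ∀ v, L v ⊆ L' v) (s t : V) :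
    Query L' s t ≤ Query L s t := by
  apply sInf_le_sInf
  rintro x ⟨w, d₁, d₂, h1, h2, rfl⟩
  exact ⟨w, d₁, d₂, h s h1, h t h2, rfl⟩

lemma prunedL_succ (k : ℕ) (u : V) :
    prunedL G ord (k + 1) u = if G.edist (ord (k + 1)) u < ⊤ ∧
          G.edist (ord (k + 1)) u < Query (prunedL G ord k) (ord (k + 1)) u then
        prunedL G ord k u ∪ {(ord (k + 1), G.edist (ord (k + 1)) u)}
      else prunedL G ord k u := rfl

lemma prunedL_subset_succ (k : ℕ) (u : V) :
    prunedL G ord k u ⊆ prunedL G ord (k + 1) u := by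
  rw [prunedL_succ]
  split
  · exact Set.subset_union_left
  · exact subset_rfl

lemma prunedL_mono {k m : ℕ} (hkm : k ≤ m) (u : V) :
    prunedL G ord k u ⊆ prunedL G ord m u := by
  induction m with
  | zero => simpa [Nat.le_zero.mp hkm] using subset_rfl
  | succ m ih =>
    rcases Nat.eq_or_lt_of_le hkm with rfl | hlt
    · exact subset_rfl
    · exact (ih (Nat.lt_succ_iff.mp hlt)).trans (prunedL_subset_succ G ord m u)

lemma prunedL_finite (m : ℕ) (u : V) : (prunedL G ord m u).Finite := by
  induction m with
  | zero => simpa [prunedL] using Set.finite_empty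
  | succ m ih =>
    rw [prunedL_succ]
    split
    · exact ih.union (Set.finite_singleton _)
    · exact ih

lemma prunedL_snd {m : ℕ} {u w : V} {d : ℕ∞} (h : (w, d) ∈ prunedL G ord m u) :
    d = G.edist w u := by
  induction m with
  | zero => simp [prunedL] at h
  | succ m ih =>
    rw [prunedL_succ] at h
    split at h
    · rcases h with h | h
      · exact ih h
      · simp only [Set.mem_singleton_iff, Prod.mk.injEq] at h
        rw [h.2, h.1]
    · exact ih h

lemma prunedL_diff_uncovered {k n : ℕ} (hk : k ≤ n) {u w : V} {d : ℕ∞}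
    (h : (w, d) ∈ prunedL G ord n u) (h2 : (w, d) ∉ prunedL G ord k u) :
    G.edist w u < Query (prunedL G ord k) w u := by
  induction n with
  | zero => simp [prunedL] at h
  | succ m ih =>
    rcases Nat.eq_or_lt_of_le hk with rfl | hlt
    · exact absurd h h2
    · have hk' : k ≤ m := Nat.lt_succ_iff.mp hlt
      rw [prunedL_succ] at h
      split at h
      · rename_i hc
        rcases h with h | h
        · exact ih hk' h
        · simp only [Set.mem_singleton_iff, Prod.mk.injEq] at h
          rw [h.1]
          exact lt_of_lt_of_le hc.2
            (Query_anti (fun v => prunedL_mono G ord hk' v) _ _)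
      · exact ih hk' h

end Aux

/-- Counting lemma for labels added after the first `k` steps: the total number of
label entries added after step `k`, `Σ_u (|L'_n(u)| - |L'_k(u)|)`, is at most the
number of ordered pairs `(s, t)` with `Query(s, t, L'_k) > d_G(s, t)`. -/
theorem prunedL_added_labels_le_uncovered_pairs {V : Type*} [Fintype V]
    (G : SimpleGraph V) (n : ℕ) (ord : ℕ → V)
    (hinj : ∀ i ∈ Finset.Icc 1 n, ∀ j ∈ Finset.Icc 1 n, ord i = ord j → i = j)
    (hsurj : ∀ u : V, ∃ i ∈ Finset.Icc 1 n, ord i = u)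
    (k : ℕ) (hk : k ≤ n) :
    ∑ u : V, ((prunedL G ord n u).ncard - (prunedL G ord k u).ncard) ≤
      {p : V × V | G.edist p.1 p.2 < Query (prunedL G ord k) p.1 p.2}.ncard := by
  classical
  set U : Set (V × V) :=
    {p : V × V | G.edist p.1 p.2 < Query (prunedL G ord k) p.1 p.2} with hU
  have hUfin : U.Finite := Set.toFinite U
  have hdiff : ∀ u : V, (prunedL G ord n u).ncard - (prunedL G ord k u).ncard
      = ((prunedL G ord n u) \ (prunedL G ord k u)).ncard := fun u =>
    (Set.ncard_diff (prunedL_mono G ord hk u) (prunedL_finite G ord k u)).symm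
  simp_rw [hdiff]
  have hDfin : ∀ u : V, ((prunedL G ord n u) \ (prunedL G ord k u)).Finite :=
    fun u => (prunedL_finite G ord n u).diff
  calc ∑ u : V, ((prunedL G ord n u) \ (prunedL G ord k u)).ncard
      = ∑ u : V, ((hDfin u).toFinset).card := by
        refine Finset.sum_congr rfl fun u _ => ?_
        exact Set.ncard_eq_toFinset_card _ (hDfin u)
    _ = (Finset.univ.sigma fun u => (hDfin u).toFinset).card :=
        (Finset.card_sigma _ _).symm
    _ ≤ hUfin.toFinset.card := by
        apply Finset.card_le_card_of_injOn (fun e => (e.2.1, e.1))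
        · rintro ⟨u, w, d⟩ he
          simp only [Finset.mem_coe, Finset.mem_sigma, Set.Finite.mem_toFinset, Set.mem_diff] at he
          simp only [Finset.mem_coe, Set.Finite.mem_toFinset, hU, Set.mem_setOf_eq]
          exact prunedL_diff_uncovered G ord hk he.2.1 he.2.2
        · rintro ⟨u, w, d⟩ he ⟨u', w', d'⟩ he' hq
          simp only [Finset.coe_sigma, Set.mem_sigma_iff, Finset.coe_univ,
            Set.Finite.coe_toFinset, Set.mem_diff] at he he'
          simp only [Prod.mk.injEq] at hq
          obtain ⟨hw, hu⟩ := hq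
          subst hu; subst hw
          have : d = d' := by
            rw [prunedL_snd G ord he.2.1, prunedL_snd G ord he'.2.1]
          subst this
          rfl
    _ = U.ncard := (Set.ncard_eq_toFinset_card _ hUfin).symm
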